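/- For any ambiguous shattered H-tree T, there exists an ambiguous H-subtree T' of T such that every leaf u of T' has exactly Rank(T) edges relevant to u in T'. (Uniform-rank pruning.) -/

import Mathlib

/-!
Induction on the number of vertices. If a leaf `w` has more than `Rank(T)` relevant edges,
walk up from `w`: the number of `w`-relevant edges above the current vertex drops by at most
one per step and is `0` at the root, so some ancestor `u₀ ≠ w` has exactly `Rank(T)` of them
above it. Deleting everything below `u₀` and giving `u₀` the hypothesis of `w` yields a
smaller pruned subtree in which `u₀` has exactly `Rank(T)` relevant edges and every other leaf
keeps its count, so the rank is unchanged.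
-/

/-- A finite rooted tree: vertices, a root, and a parent map under which every
vertex reaches the root. -/
structure RTree where
  V : Type
  [fin : Fintype V]
  root : V
  parent : V → V
  parent_root : parent root = root
  reaches : ∀ v : V, ∃ k : ℕ, parent^[k] v = root

namespace RTree

/-- Children of a vertex (the root is not a child of anything). -/
def children (t : RTree) (v : t.V) : Set t.V := {w | t.parent w = v ∧ w ≠ t.root}

def IsLeaf (t : RTree) (v : t.V) : Prop := t.children v = ∅

/-- `a` is an ancestor (or equal to) `u`. -/
def Anc (t : RTree) (a u : t.V) : Prop := ∃ k : ℕ, t.parent^[k] u = a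

noncomputable def depthOf (t : RTree) (v : t.V) : ℕ := sInf {k : ℕ | t.parent^[k] v = t.root}

noncomputable def depth (t : RTree) : ℕ := sSup {n : ℕ | ∃ v : t.V, n = t.depthOf v}

end RTree

/-- An ambiguous shattered `H`-tree: internal vertices carry instances, non-root
vertices (identified with the edges to their parents) carry labels, distinct among
siblings, leaves carry hypotheses from `H` compatible with all edge labels above
them, and `E0` selects exactly one child edge of each internal vertex. -/
structure AmbTree (X Y : Type) (H : Set (X → Set Y)) where
  t : RTree
  xlab : t.V → X
  ylab : t.V → Y
  hlab : t.V → (X → Set Y)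
  E0 : Set t.V
  e0_ne_root : ∀ a ∈ E0, a ≠ t.root
  e0_unique : ∀ v : t.V, (t.children v).Nonempty → ∃! a : t.V, a ∈ t.children v ∩ E0
  sib_distinct : ∀ a b : t.V, a ≠ t.root → b ≠ t.root →
    t.parent a = t.parent b → a ≠ b → ylab a ≠ ylab b
  hlab_mem : ∀ u : t.V, t.IsLeaf u → hlab u ∈ H
  path_mem : ∀ u a : t.V, t.IsLeaf u → t.Anc a u → a ≠ t.root →
    ylab a ∈ hlab u (xlab (t.parent a))

namespace AmbTree

variable {X Y : Type} {H : Set (X → Set Y)}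

/-- Edge `a` (on the root-to-`u` path) is relevant to leaf `u`. -/
def Relevant (T : AmbTree X Y H) (a u : T.t.V) : Prop :=
  a ≠ T.t.root ∧ T.t.Anc a u ∧
    (a ∉ T.E0 ∨ ∃ b : T.t.V, T.t.parent b = T.t.parent a ∧ b ≠ T.t.root ∧
      T.ylab b ∉ T.hlab u (T.xlab (T.t.parent a)))

noncomputable def relCount (T : AmbTree X Y H) (u : T.t.V) : ℕ :=
  {a : T.t.V | T.Relevant a u}.ncard

/-- Rank: the minimum over leaves of the number of relevant edges. -/
noncomputable def rank (T : AmbTree X Y H) : ℕ :=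
  sInf {n : ℕ | ∃ u : T.t.V, T.t.IsLeaf u ∧ n = T.relCount u}

noncomputable def depth (T : AmbTree X Y H) : ℕ := T.t.depth

end AmbTree

/-- `T'` is a pruned subtree of `T`: an injective embedding commuting with parents
(no contraction), preserving root, instance/edge labels and `E0`-membership, where
each leaf of `T'` takes its hypothesis label from some leaf of `T` below it. -/
def AmbTree.IsPrunedSubtree {X Y : Type} {H : Set (X → Set Y)} (T' T : AmbTree X Y H) : Prop :=
  ∃ e : T'.t.V → T.t.V, Function.Injective e ∧ e T'.t.root = T.t.root ∧
    (∀ v : T'.t.V, v ≠ T'.t.root → e (T'.t.parent v) = T.t.parent (e v)) ∧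
    (∀ v : T'.t.V, ¬ T'.t.IsLeaf v → T'.xlab v = T.xlab (e v)) ∧
    (∀ v : T'.t.V, v ≠ T'.t.root → T'.ylab v = T.ylab (e v)) ∧
    (∀ v : T'.t.V, v ∈ T'.E0 ↔ e v ∈ T.E0) ∧
    (∀ u : T'.t.V, T'.t.IsLeaf u → ∃ w : T.t.V, T.t.IsLeaf w ∧ T.t.Anc (e u) w ∧
      T'.hlab u = T.hlab w)

attribute [instance] RTree.fin

theorem Nat.exists_eq_of_le_succ_add_one {f : ℕ → ℕ} {r n : ℕ}
    (hstep : ∀ j, f j ≤ f (j + 1) + 1) (hn : f n ≤ r) (h0 : r ≤ f 0) : ∃ j, f j = r := by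
  classical
  have hex : ∃ j, f j ≤ r := ⟨n, hn⟩
  refine ⟨Nat.find hex, le_antisymm (Nat.find_spec hex) ?_⟩
  rcases h : Nat.find hex with _ | i
  · exact h0
  · have hi : r < f i := not_le.1 (Nat.find_min hex (by omega))
    have := hstep i
    omega

namespace RTree

variable {t : RTree}

def StrictAnc (t : RTree) (a v : t.V) : Prop := t.Anc a v ∧ a ≠ v

lemma iterate_parent_root (k : ℕ) : t.parent^[k] t.root = t.root :=
  Function.iterate_fixed t.parent_root k

lemma anc_refl (v : t.V) : t.Anc v v := ⟨0, rfl⟩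

lemma anc_parent (v : t.V) : t.Anc (t.parent v) v := ⟨1, rfl⟩

lemma Anc.trans {a b c : t.V} (hab : t.Anc a b) (hbc : t.Anc b c) : t.Anc a c := by
  obtain ⟨k, rfl⟩ := hab
  obtain ⟨l, rfl⟩ := hbc
  exact ⟨k + l, Function.iterate_add_apply _ _ _ _⟩

lemma Anc.eq_or_anc_parent {a v : t.V} (h : t.Anc a v) : a = v ∨ t.Anc a (t.parent v) := by
  obtain ⟨_ | k, rfl⟩ := h
  · exact Or.inl rfl
  · exact Or.inr ⟨k, (Function.iterate_succ_apply _ _ _).symm⟩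

lemma eq_root_of_anc_root {a : t.V} (h : t.Anc a t.root) : a = t.root := by
  obtain ⟨k, rfl⟩ := h
  exact iterate_parent_root k

lemma eq_root_of_iterate_eq {v : t.V} {k : ℕ} (hk : k ≠ 0) (h : t.parent^[k] v = v) :
    v = t.root := by
  obtain ⟨m, hm⟩ := t.reaches v
  have hper : Function.IsPeriodicPt t.parent (k * m) v := Function.IsPeriodicPt.mul_const h m
  calc v = t.parent^[k * m - m] (t.parent^[m] v) := by
        rw [← Function.iterate_add_apply, Nat.sub_add_cancel (Nat.le_mul_of_pos_left m
          (Nat.pos_of_ne_zero hk)), hper.eq]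
    _ = t.root := by rw [hm, iterate_parent_root]

lemma Anc.antisymm {a b : t.V} (hab : t.Anc a b) (hba : t.Anc b a) : a = b := by
  obtain ⟨_ | k, hk⟩ := hab
  · exact hk.symm
  obtain ⟨l, hl⟩ := hba
  have hroot : a = t.root :=
    eq_root_of_iterate_eq (k := (k + 1) + l) (by omega) (by rw [Function.iterate_add_apply, hl, hk])
  rw [← hl, hroot, iterate_parent_root]

lemma not_strictAnc_root (a : t.V) : ¬ t.StrictAnc a t.root :=
  fun h => h.2 (eq_root_of_anc_root h.1)

lemma not_strictAnc_of_anc {u₀ v a : t.V} (hv : ¬ t.StrictAnc u₀ v) (hav : t.Anc a v) :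
    ¬ t.StrictAnc u₀ a := by
  rintro ⟨hua, hne⟩
  by_cases hvu : u₀ = v
  · exact hne (hua.antisymm (hvu ▸ hav))
  · exact hv ⟨hua.trans hav, hvu⟩

lemma strictAnc_of_parent_eq {u₀ c : t.V} (hc : t.parent c = u₀) (hcr : c ≠ t.root) :
    t.StrictAnc u₀ c := by
  refine ⟨hc ▸ anc_parent c, ?_⟩
  rintro rfl
  exact hcr (eq_root_of_iterate_eq one_ne_zero hc)

lemma not_strictAnc_of_parent_eq {u₀ v c : t.V} (hv : ¬ t.StrictAnc u₀ v) (hvu : u₀ ≠ v)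
    (hc : t.parent c = v) : ¬ t.StrictAnc u₀ c := by
  rintro ⟨huc, hne⟩
  rcases huc.eq_or_anc_parent with h | h
  · exact hne h
  · exact hv ⟨hc ▸ h, hvu⟩

lemma not_strictAnc_of_parent_eq_parent {u₀ a b : t.V} (ha : ¬ t.StrictAnc u₀ a)
    (har : a ≠ t.root) (hb : t.parent b = t.parent a) : ¬ t.StrictAnc u₀ b :=
  not_strictAnc_of_parent_eq (not_strictAnc_of_anc ha (anc_parent a))
    (fun h => ha (strictAnc_of_parent_eq h.symm har)) hb

lemma semiconj_parent {t₁ : RTree} {e : t₁.V → t.V} (hroot : e t₁.root = t.root)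
    (hpar : ∀ v, v ≠ t₁.root → e (t₁.parent v) = t.parent (e v)) :
    Function.Semiconj e t₁.parent t.parent := by
  intro v
  by_cases hv : v = t₁.root
  · rw [hv, t₁.parent_root, hroot, t.parent_root]
  · exact hpar v hv

lemma Anc.map {t₁ : RTree} {e : t₁.V → t.V} (he : Function.Semiconj e t₁.parent t.parent)
    {a v : t₁.V} (h : t₁.Anc a v) : t.Anc (e a) (e v) := by
  obtain ⟨k, rfl⟩ := h
  exact ⟨k, (he.iterate_right k v).symm⟩

lemma isLeaf_of_isLeaf_map {t₁ : RTree} {e : t₁.V → t.V} (he : Function.Injective e)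
    (hroot : e t₁.root = t.root) (hpar : ∀ v, v ≠ t₁.root → e (t₁.parent v) = t.parent (e v))
    {v : t₁.V} (hv : t.IsLeaf (e v)) : t₁.IsLeaf v := by
  refine Set.eq_empty_of_forall_notMem fun c ⟨hcv, hcr⟩ => ?_
  refine Set.eq_empty_iff_forall_notMem.1 hv (e c) ⟨?_, fun h => hcr (he (h.trans hroot.symm))⟩
  rw [← hpar c hcr, hcv]

section Truncate

variable (t) in
noncomputable def truncate (u₀ : t.V) : RTree where
  V := {v : t.V // ¬ t.StrictAnc u₀ v}
  fin := by classical infer_instance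
  root := ⟨t.root, not_strictAnc_root u₀⟩
  parent v := ⟨t.parent v.1, not_strictAnc_of_anc v.2 (anc_parent v.1)⟩
  parent_root := Subtype.ext t.parent_root
  reaches v := by
    obtain ⟨k, hk⟩ := t.reaches v.1
    exact ⟨k, Subtype.ext <|
      (Function.Semiconj.iterate_right (f := Subtype.val) (gb := t.parent) (fun _ => rfl) k v).trans hk⟩

variable {u₀ : t.V}

lemma truncate_ne_root_iff {v : (t.truncate u₀).V} :
    v ≠ (t.truncate u₀).root ↔ v.1 ≠ t.root :=
  Subtype.ext_iff.not

lemma truncate_anc_iff {a v : (t.truncate u₀).V} :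
    (t.truncate u₀).Anc a v ↔ t.Anc a.1 v.1 := by
  have hval (k : ℕ) : ((t.truncate u₀).parent^[k] v).1 = t.parent^[k] v.1 :=
    Function.Semiconj.iterate_right (f := Subtype.val) (gb := t.parent) (fun _ => rfl) k v
  exact exists_congr fun k => Subtype.ext_iff.trans (by rw [hval])

lemma truncate_mem_children_iff {c v : (t.truncate u₀).V} :
    c ∈ (t.truncate u₀).children v ↔ c.1 ∈ t.children v.1 :=
  and_congr Subtype.ext_iff truncate_ne_root_iff

lemma truncate_isLeaf_iff {v : (t.truncate u₀).V} :
    (t.truncate u₀).IsLeaf v ↔ v.1 = u₀ ∨ t.IsLeaf v.1 := by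
  simp only [IsLeaf, Set.eq_empty_iff_forall_notMem]
  constructor
  · intro h
    refine or_iff_not_imp_left.2 fun hvu c hc => h ⟨c, ?_⟩ (truncate_mem_children_iff.2 hc)
    exact not_strictAnc_of_parent_eq v.2 (Ne.symm hvu) hc.1
  · rintro (h | h) c hc
    · exact c.2 (strictAnc_of_parent_eq ((Subtype.ext_iff.1 hc.1).trans h) (truncate_ne_root_iff.1 hc.2))
    · exact h c.1 (truncate_mem_children_iff.1 hc)

open Classical in
/-- The leaf of `t` whose hypothesis label a leaf of `t.truncate u₀` inherits. -/
noncomputable def leafRep (u₀ w₀ : t.V) (v : (t.truncate u₀).V) : t.V :=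
  if v.1 = u₀ then w₀ else v.1

variable {w₀ : t.V}

lemma leafRep_of_eq {v : (t.truncate u₀).V} (h : v.1 = u₀) : t.leafRep u₀ w₀ v = w₀ :=
  if_pos h

lemma leafRep_of_ne {v : (t.truncate u₀).V} (h : v.1 ≠ u₀) : t.leafRep u₀ w₀ v = v.1 :=
  if_neg h

lemma isLeaf_leafRep (hw : t.IsLeaf w₀) {v : (t.truncate u₀).V}
    (hv : (t.truncate u₀).IsLeaf v) : t.IsLeaf (t.leafRep u₀ w₀ v) := by
  unfold leafRep
  split_ifs with h
  · exact hw
  · exact (truncate_isLeaf_iff.1 hv).resolve_left h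

lemma anc_leafRep (hanc : t.Anc u₀ w₀) (v : (t.truncate u₀).V) :
    t.Anc v.1 (t.leafRep u₀ w₀ v) := by
  unfold leafRep
  split_ifs with h
  · exact h.symm ▸ hanc
  · exact anc_refl _

end Truncate

end RTree

namespace AmbTree

variable {X Y : Type} {H : Set (X → Set Y)}

lemma rank_le_relCount {T : AmbTree X Y H} {u : T.t.V} (hu : T.t.IsLeaf u) :
    T.rank ≤ T.relCount u :=
  Nat.sInf_le ⟨u, hu, rfl⟩

lemma rank_eq_of_isLeaf {T : AmbTree X Y H} {r : ℕ} {u : T.t.V} (hu : T.t.IsLeaf u)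
    (hur : T.relCount u = r) (hle : ∀ v, T.t.IsLeaf v → r ≤ T.relCount v) : T.rank = r :=
  le_antisymm (hur ▸ rank_le_relCount hu)
    (le_csInf ⟨_, u, hu, rfl⟩ fun _ ⟨v, hv, hn⟩ => hn ▸ hle v hv)

noncomputable def relCountAbove (T : AmbTree X Y H) (w v : T.t.V) : ℕ :=
  {a : T.t.V | T.Relevant a w ∧ T.t.Anc a v}.ncard

variable {T : AmbTree X Y H}

lemma relCountAbove_self (w : T.t.V) : T.relCountAbove w w = T.relCount w := by
  unfold relCountAbove relCount
  congr 1
  ext a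
  exact and_iff_left_of_imp fun h => h.2.1

lemma relCountAbove_root (w : T.t.V) : T.relCountAbove w T.t.root = 0 := by
  refine (Set.ncard_eq_zero (Set.toFinite _)).2 (Set.eq_empty_of_forall_notMem fun a ⟨ha, hroot⟩ => ?_)
  exact ha.1 (RTree.eq_root_of_anc_root hroot)

lemma relCountAbove_le_parent_add_one (w v : T.t.V) :
    T.relCountAbove w v ≤ T.relCountAbove w (T.t.parent v) + 1 := by
  refine (Set.ncard_le_ncard (t := insert v {a | T.Relevant a w ∧ T.t.Anc a (T.t.parent v)})
    ?_ (Set.toFinite _)).trans (Set.ncard_insert_le _ _)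
  rintro a ⟨ha, hav⟩
  rcases hav.eq_or_anc_parent with rfl | h
  · exact Set.mem_insert a _
  · exact Or.inr ⟨ha, h⟩

lemma exists_relCountAbove_eq {w : T.t.V} {r : ℕ} (hr : r ≤ T.relCount w) :
    ∃ j, T.relCountAbove w (T.t.parent^[j] w) = r := by
  obtain ⟨m, hm⟩ := T.t.reaches w
  refine Nat.exists_eq_of_le_succ_add_one (n := m) (fun j => ?_) ?_ ?_
  · rw [Function.iterate_succ_apply']
    exact relCountAbove_le_parent_add_one w _
  · simp only [hm, relCountAbove_root, zero_le]
  · rwa [Function.iterate_zero_apply, relCountAbove_self]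

lemma IsPrunedSubtree.refl (T : AmbTree X Y H) : T.IsPrunedSubtree T :=
  ⟨id, Function.injective_id, rfl, fun _ _ => rfl, fun _ _ => rfl, fun _ _ => rfl,
    fun _ => Iff.rfl, fun u hu => ⟨u, hu, RTree.anc_refl u, rfl⟩⟩

lemma IsPrunedSubtree.trans {T₂ T₁ : AmbTree X Y H} (h₂₁ : T₂.IsPrunedSubtree T₁)
    (h₁ : T₁.IsPrunedSubtree T) : T₂.IsPrunedSubtree T := by
  obtain ⟨e, einj, eroot, epar, ex, ey, eE0, eleaf⟩ := h₂₁
  obtain ⟨f, finj, froot, fpar, fx, fy, fE0, fleaf⟩ := h₁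
  have enroot {v : T₂.t.V} (hv : v ≠ T₂.t.root) : e v ≠ T₁.t.root :=
    fun h => hv (einj (h.trans eroot.symm))
  refine ⟨f ∘ e, finj.comp einj, by simp only [Function.comp_apply, eroot, froot],
    fun v hv => ?_, fun v hv => ?_, fun v hv => ?_, fun v => (eE0 v).trans (fE0 (e v)),
    fun u hu => ?_⟩
  · simp only [Function.comp_apply, epar v hv, fpar _ (enroot hv)]
  · rw [ex v hv, Function.comp_apply,
      fx _ fun hL => hv (RTree.isLeaf_of_isLeaf_map einj eroot epar hL)]
  · rw [ey v hv, Function.comp_apply, fy _ (enroot hv)]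
  · obtain ⟨w₁, hw₁, hanc₁, hlab₁⟩ := eleaf u hu
    obtain ⟨w, hw, hanc, hlab⟩ := fleaf w₁ hw₁
    exact ⟨w, hw, (hanc₁.map (RTree.semiconj_parent froot fpar)).trans hanc, hlab₁.trans hlab⟩

section Truncate

variable {u₀ w₀ : T.t.V}

noncomputable def truncate (T : AmbTree X Y H) (u₀ w₀ : T.t.V) (hw : T.t.IsLeaf w₀)
    (hanc : T.t.Anc u₀ w₀) : AmbTree X Y H where
  t := T.t.truncate u₀
  xlab v := T.xlab v.1
  ylab v := T.ylab v.1
  hlab v := T.hlab (T.t.leafRep u₀ w₀ v)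
  E0 := {v | v.1 ∈ T.E0}
  e0_ne_root a ha := RTree.truncate_ne_root_iff.2 (T.e0_ne_root a.1 ha)
  e0_unique v := by
    rintro ⟨c, hc⟩
    rw [RTree.truncate_mem_children_iff] at hc
    have hvu : u₀ ≠ v.1 := fun h =>
      c.2 (RTree.strictAnc_of_parent_eq (hc.1.trans h.symm) hc.2)
    obtain ⟨a, ⟨hac, haE⟩, huniq⟩ := T.e0_unique v.1 ⟨c.1, hc⟩
    refine ⟨⟨a, RTree.not_strictAnc_of_parent_eq v.2 hvu hac.1⟩,
      ⟨RTree.truncate_mem_children_iff.2 hac, haE⟩, ?_⟩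
    rintro b ⟨hbc, hbE⟩
    exact Subtype.ext (huniq b.1 ⟨RTree.truncate_mem_children_iff.1 hbc, hbE⟩)
  sib_distinct a b har hbr hpar hne :=
    T.sib_distinct a.1 b.1 (RTree.truncate_ne_root_iff.1 har) (RTree.truncate_ne_root_iff.1 hbr)
      (Subtype.ext_iff.1 hpar) (Subtype.coe_ne_coe.2 hne)
  hlab_mem u hu := T.hlab_mem _ (RTree.isLeaf_leafRep hw hu)
  path_mem u a hu ha har :=
    T.path_mem _ a.1 (RTree.isLeaf_leafRep hw hu)
      ((RTree.truncate_anc_iff.1 ha).trans (RTree.anc_leafRep hanc u))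
      (RTree.truncate_ne_root_iff.1 har)

variable {hw : T.t.IsLeaf w₀} {hanc : T.t.Anc u₀ w₀}

lemma truncate_isPrunedSubtree : (T.truncate u₀ w₀ hw hanc).IsPrunedSubtree T :=
  ⟨Subtype.val, Subtype.val_injective, rfl, fun _ _ => rfl, fun _ _ => rfl, fun _ _ => rfl,
    fun _ => Iff.rfl,
    fun u hu => ⟨_, RTree.isLeaf_leafRep hw hu, RTree.anc_leafRep hanc u, rfl⟩⟩

/-- Siblings of kept edges are kept, so no witness of relevance is lost. -/
lemma image_val_relevant_truncate (u : (T.truncate u₀ w₀ hw hanc).t.V) :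
    Subtype.val '' {a | (T.truncate u₀ w₀ hw hanc).Relevant a u} =
      {a | T.Relevant a (T.t.leafRep u₀ w₀ u) ∧ T.t.Anc a u.1} := by
  ext a
  constructor
  · rintro ⟨a, ⟨har, hau, hrel⟩, rfl⟩
    replace hau := RTree.truncate_anc_iff.1 hau
    refine ⟨⟨RTree.truncate_ne_root_iff.1 har, hau.trans (RTree.anc_leafRep hanc u), ?_⟩, hau⟩
    rcases hrel with hrel | ⟨b, hb, hbr, hby⟩
    · exact Or.inl hrel
    · exact Or.inr ⟨b.1, Subtype.ext_iff.1 hb, RTree.truncate_ne_root_iff.1 hbr, hby⟩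
  · rintro ⟨⟨har, -, hrel⟩, hau⟩
    have hak : ¬ T.t.StrictAnc u₀ a := RTree.not_strictAnc_of_anc u.2 hau
    refine ⟨⟨a, hak⟩, ⟨RTree.truncate_ne_root_iff.2 har, RTree.truncate_anc_iff.2 hau, ?_⟩, rfl⟩
    rcases hrel with hrel | ⟨b, hb, hbr, hby⟩
    · exact Or.inl hrel
    · exact Or.inr ⟨⟨b, RTree.not_strictAnc_of_parent_eq_parent hak har hb⟩, Subtype.ext hb,
        RTree.truncate_ne_root_iff.2 hbr, hby⟩

lemma relCount_truncate (u : (T.truncate u₀ w₀ hw hanc).t.V) :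
    (T.truncate u₀ w₀ hw hanc).relCount u = T.relCountAbove (T.t.leafRep u₀ w₀ u) u.1 := by
  rw [relCountAbove, ← image_val_relevant_truncate]
  exact (Set.ncard_image_of_injective _ Subtype.val_injective).symm

end Truncate

end AmbTree

namespace AmbTree

variable {X Y : Type} {H : Set (X → Set Y)}

lemma exists_isPrunedSubtree_card_lt {T : AmbTree X Y H} {w : T.t.V} (hw : T.t.IsLeaf w)
    (hlt : T.rank < T.relCount w) :
    ∃ T' : AmbTree X Y H, T'.IsPrunedSubtree T ∧
      Fintype.card T'.t.V < Fintype.card T.t.V ∧ T'.rank = T.rank := by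
  obtain ⟨j, hj⟩ := exists_relCountAbove_eq hlt.le
  set u₀ := T.t.parent^[j] w
  have hanc : T.t.Anc u₀ w := ⟨j, rfl⟩
  have hne : u₀ ≠ w := by
    rintro h
    rw [h, relCountAbove_self] at hj
    omega
  obtain ⟨u, hu⟩ : ∃ u : (T.truncate u₀ w hw hanc).t.V, u.1 = u₀ := ⟨⟨u₀, fun h => h.2 rfl⟩, rfl⟩
  have hcount : (T.truncate u₀ w hw hanc).relCount u = T.rank := by
    rw [relCount_truncate, RTree.leafRep_of_eq hu, hu, hj]
  refine ⟨T.truncate u₀ w hw hanc, truncate_isPrunedSubtree, ?_, ?_⟩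
  · classical
    exact Fintype.card_subtype_lt (p := fun v => ¬ T.t.StrictAnc u₀ v) (not_not.2 ⟨hanc, hne⟩)
  refine rank_eq_of_isLeaf (RTree.truncate_isLeaf_iff.2 (Or.inl hu)) hcount fun v hv => ?_
  by_cases h : v.1 = u₀
  · obtain rfl : v = u := Subtype.ext (h.trans hu.symm)
    exact hcount.ge
  · rw [relCount_truncate, RTree.leafRep_of_ne h, relCountAbove_self]
    exact rank_le_relCount ((RTree.truncate_isLeaf_iff.1 hv).resolve_left h)

end AmbTree

/-- uniform-rank pruning. Every ambiguous shattered `H`-tree `T` has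
an `H`-subtree `T'` in which every leaf has exactly `Rank(T)` relevant edges. -/
theorem uniform_rank_pruning {X Y : Type} (H : Set (X → Set Y)) (T : AmbTree X Y H) :
    ∃ T' : AmbTree X Y H, T'.IsPrunedSubtree T ∧
      ∀ u : T'.t.V, T'.t.IsLeaf u → T'.relCount u = T.rank := by
  induction hn : Fintype.card T.t.V using Nat.strong_induction_on generalizing T with
  | _ n ih =>
    by_cases hall : ∀ u : T.t.V, T.t.IsLeaf u → T.relCount u = T.rank
    · exact ⟨T, .refl T, hall⟩
    push Not at hall
    obtain ⟨w, hw, hne⟩ := hall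
    obtain ⟨T₁, h₁, hcard, hrank⟩ :=
      AmbTree.exists_isPrunedSubtree_card_lt hw ((AmbTree.rank_le_relCount hw).lt_of_ne hne.symm)
    obtain ⟨T₂, h₂, huniform⟩ := ih _ (hn ▸ hcard) T₁ rfl
    exact ⟨T₂, h₂.trans h₁, fun u hu => (huniform u hu).trans hrank⟩
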